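/- arXiv:2604.02803 — 3 statements merged into one kernel-verified Lean document; each statement's English description precedes it below -/
import Mathlib

section
/- Let C be a bounded closed curve in ℂ and χ analytic in an open neighborhood of C. Then the function P(x) = (1/(2πi)) ∫_C χ(s) x^{−s} ds, defined for x > 0 with x^{−s} = exp(−s log x), is differentiable on (0,∞), and there exists c > 0 such that P(x) = O(x^{−c}) as x → 0⁺ and P(x) = O(x^c) as x → ∞. -/
/-!
With `u = log x` the integral becomes `Φ u = ∫₀¹ f t * exp (g t * u) dt`, where
`f = (χ ∘ γ) * γ'` and `g = -γ` are continuous on `[0, 1]`. Differentiating under the integral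
sign shows that `Φ` is entire, and `|Φ u| ≤ M e^{R |u|}` with `R` a bound for `|γ|` on `[0, 1]`.
For `u = log x` this exponential bound reads `M x^{-R}` when `x ≤ 1` and `M x^R` when `x ≥ 1`.
-/

open Asymptotics Complex Filter MeasureTheory Set Topology
open scoped Interval

theorem norm_mul_cexp_mul_le {z w : ℂ} {M R : ℝ} (hz : ‖z‖ ≤ M) (hw : ‖w‖ ≤ R) (u : ℂ) :
    ‖z * cexp (w * u)‖ ≤ M * Real.exp (R * ‖u‖) := by
  have hre : (w * u).re ≤ R * ‖u‖ :=
    calc (w * u).re ≤ ‖w * u‖ := re_le_norm _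
      _ = ‖w‖ * ‖u‖ := norm_mul w u
      _ ≤ R * ‖u‖ := by gcongr
  rw [norm_mul, norm_exp]
  exact mul_le_mul hz (Real.exp_le_exp.mpr hre) (Real.exp_nonneg _)
    ((norm_nonneg z).trans hz)

section ExpIntegral

variable {a b : ℝ} {f g : ℝ → ℂ}

theorem norm_integral_mul_cexp_le {M R : ℝ} (hf : ∀ t ∈ uIcc a b, ‖f t‖ ≤ M)
    (hg : ∀ t ∈ uIcc a b, ‖g t‖ ≤ R) (u : ℂ) :
    ‖∫ t in a..b, f t * cexp (g t * u)‖ ≤ M * |b - a| * Real.exp (R * ‖u‖) := by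
  rw [mul_right_comm]
  refine intervalIntegral.norm_integral_le_of_norm_le_const fun t ht => ?_
  exact norm_mul_cexp_mul_le (hf t (uIoc_subset_uIcc ht)) (hg t (uIoc_subset_uIcc ht)) u

theorem continuousOn_mul_cexp_mul {s : Set ℝ} (hf : ContinuousOn f s) (hg : ContinuousOn g s)
    (u : ℂ) : ContinuousOn (fun t => f t * cexp (g t * u)) s :=
  hf.mul (hg.mul continuousOn_const).cexp

theorem hasDerivAt_integral_mul_cexp (hf : ContinuousOn f (uIcc a b))
    (hg : ContinuousOn g (uIcc a b)) (u₀ : ℂ) :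
    HasDerivAt (fun u => ∫ t in a..b, f t * cexp (g t * u))
      (∫ t in a..b, f t * g t * cexp (g t * u₀)) u₀ := by
  obtain ⟨M, hM⟩ := isCompact_uIcc.exists_bound_of_continuousOn hf
  obtain ⟨R, hR⟩ := isCompact_uIcc.exists_bound_of_continuousOn hg
  have hM₀ : 0 ≤ M := (norm_nonneg _).trans (hM a left_mem_uIcc)
  have hR₀ : 0 ≤ R := (norm_nonneg _).trans (hR a left_mem_uIcc)
  have hmeas {φ : ℝ → ℂ} (hφ : ContinuousOn φ (uIcc a b)) :
      AEStronglyMeasurable φ (volume.restrict (Ι a b)) :=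
    (hφ.mono uIoc_subset_uIcc).aestronglyMeasurable measurableSet_uIoc
  have hbound : ∀ t ∈ Ι a b, ∀ u ∈ Metric.ball u₀ 1,
      ‖f t * g t * cexp (g t * u)‖ ≤ M * R * Real.exp (R * (‖u₀‖ + 1)) := by
    intro t ht u hu
    have ht' := uIoc_subset_uIcc ht
    have hu' : ‖u‖ ≤ ‖u₀‖ + 1 := norm_le_norm_add_const_of_dist_le (Metric.mem_ball.mp hu).le
    calc ‖f t * g t * cexp (g t * u)‖ ≤ M * R * Real.exp (R * ‖u‖) :=
          norm_mul_cexp_mul_le (norm_mul_le_of_le (hM t ht') (hR t ht')) (hR t ht') u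
      _ ≤ M * R * Real.exp (R * (‖u₀‖ + 1)) := by gcongr
  refine (intervalIntegral.hasDerivAt_integral_of_dominated_loc_of_deriv_le
    (F' := fun u t => f t * g t * cexp (g t * u)) (Metric.ball_mem_nhds u₀ one_pos)
    (.of_forall fun u => hmeas (continuousOn_mul_cexp_mul hf hg u))
    (continuousOn_mul_cexp_mul hf hg u₀).intervalIntegrable
    (hmeas (continuousOn_mul_cexp_mul (hf.mul hg) hg u₀)) (.of_forall hbound)
    intervalIntegrable_const ?_).2
  refine .of_forall fun t _ u _ => ?_
  exact (((hasDerivAt_id' u).const_mul (g t)).cexp.const_mul (f t)).congr_deriv (by ring)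

end ExpIntegral

section LogGrowth

variable {E : Type*} [SeminormedAddCommGroup E] {h : ℝ → E} {K c : ℝ}

theorem isBigO_nhdsGT_zero_rpow_neg_of_norm_le_exp_abs_log
    (hh : ∀ x > 0, ‖h x‖ ≤ K * Real.exp (c * |Real.log x|)) :
    h =O[𝓝[>] 0] fun x => x ^ (-c) := by
  refine IsBigO.of_bound K ?_
  filter_upwards [Ioo_mem_nhdsGT one_pos] with x ⟨hx₀, hx₁⟩
  rw [Real.norm_of_nonneg (by positivity), Real.rpow_def_of_pos hx₀]
  convert hh x hx₀ using 3
  rw [abs_of_nonpos (Real.log_nonpos hx₀.le hx₁.le)]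
  ring

theorem isBigO_atTop_rpow_of_norm_le_exp_abs_log
    (hh : ∀ x > 0, ‖h x‖ ≤ K * Real.exp (c * |Real.log x|)) :
    h =O[atTop] fun x => x ^ c := by
  refine IsBigO.of_bound K ?_
  filter_upwards [eventually_ge_atTop 1] with x hx
  have hx₀ : 0 < x := one_pos.trans_le hx
  rw [Real.norm_of_nonneg (by positivity), Real.rpow_def_of_pos hx₀]
  convert hh x hx₀ using 3
  rw [abs_of_nonneg (Real.log_nonneg hx)]
  ring

end LogGrowth

theorem stmt_4_general (γ : ℝ → ℂ) (hγ : ContDiff ℝ 1 γ)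
    (U : Set ℂ) (hγU : ∀ t ∈ Set.Icc (0 : ℝ) 1, γ t ∈ U)
    (χ : ℂ → ℂ) (hχ : DifferentiableOn ℂ χ U)
    (P : ℝ → ℂ)
    (hP : P = fun x : ℝ => (1 / (2 * Real.pi * Complex.I)) *
      ∫ t in (0 : ℝ)..1,
        χ (γ t) * Complex.exp (-(γ t) * (Real.log x : ℂ)) * deriv γ t) :
    DifferentiableOn ℝ P (Set.Ioi 0) ∧
    ∃ c > (0 : ℝ),
      (P =O[nhdsWithin 0 (Set.Ioi 0)] fun x : ℝ => x ^ (-c)) ∧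
      (P =O[Filter.atTop] fun x : ℝ => x ^ c) := by
  set f : ℝ → ℂ := fun t => χ (γ t) * deriv γ t
  set g : ℝ → ℂ := fun t => -γ t
  set C : ℂ := 1 / (2 * Real.pi * Complex.I)
  have hf : ContinuousOn f (uIcc 0 1) := by
    rw [uIcc_of_le zero_le_one]
    exact (hχ.continuousOn.comp hγ.continuous.continuousOn hγU).mul
      (hγ.continuous_deriv le_rfl).continuousOn
  have hg : ContinuousOn g (uIcc 0 1) := hγ.continuous.neg.continuousOn
  have hPf : P = fun x : ℝ => C * ∫ t in (0 : ℝ)..1, f t * cexp (g t * Real.log x) := by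
    rw [hP]
    ext x
    congr 1
    refine intervalIntegral.integral_congr fun t _ => ?_
    simp only [f, g]
    ring
  obtain ⟨M, hM⟩ := isCompact_uIcc.exists_bound_of_continuousOn hf
  obtain ⟨R, hR⟩ := isCompact_uIcc.exists_bound_of_continuousOn hg
  have hR₁ (t) (ht : t ∈ uIcc (0 : ℝ) 1) : ‖g t‖ ≤ max R 1 := (hR t ht).trans (le_max_left _ _)
  have hbound : ∀ x > 0,
      ‖P x‖ ≤ ‖C‖ * (M * |1 - 0|) * Real.exp (max R 1 * |Real.log x|) := by
    intro x _
    rw [hPf, norm_mul, mul_assoc, ← Real.norm_eq_abs (Real.log x), ← Complex.norm_real]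
    gcongr
    exact norm_integral_mul_cexp_le hM hR₁ _
  refine ⟨fun x hx => ?_, max R 1, by positivity,
    isBigO_nhdsGT_zero_rpow_neg_of_norm_le_exp_abs_log hbound,
    isBigO_atTop_rpow_of_norm_le_exp_abs_log hbound⟩
  rw [hPf]
  have hΦ := (hasDerivAt_integral_mul_cexp hf hg (Real.log x)).comp_ofReal
  exact ((hΦ.scomp x (Real.hasDerivAt_log hx.ne')).const_mul C).differentiableAt
    |>.differentiableWithinAt

/-- Bochner's lemma: a contour integral P(x) = (1/2πi)∫_C χ(s)x^{−s}ds over a bounded closed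
curve is differentiable on (0,∞) with polynomial growth bounds at 0 and ∞. -/
theorem stmt_4 (γ : ℝ → ℂ) (hγ : ContDiff ℝ 1 γ) (hclosed : γ 1 = γ 0)
    (U : Set ℂ) (hU : IsOpen U) (hγU : ∀ t ∈ Set.Icc (0 : ℝ) 1, γ t ∈ U)
    (χ : ℂ → ℂ) (hχ : DifferentiableOn ℂ χ U)
    (P : ℝ → ℂ)
    (hP : P = fun x : ℝ => (1 / (2 * Real.pi * Complex.I)) *
      ∫ t in (0 : ℝ)..1,
        χ (γ t) * Complex.exp (-(γ t) * (Real.log x : ℂ)) * deriv γ t) :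
    DifferentiableOn ℝ P (Set.Ioi 0) ∧
    ∃ c > (0 : ℝ),
      (P =O[nhdsWithin 0 (Set.Ioi 0)] fun x : ℝ => x ^ (-c)) ∧
      (P =O[Filter.atTop] fun x : ℝ => x ^ c) :=
  stmt_4_general γ hγ U hγU χ hχ P hP
end

section
/- With notation as in the previous item and additionally Y_{α,β}(x) = (1/(2πi)) ∫_{(a)} Γ(s) ∏_{i=1}^r Γ(α_i s + β_i) x^{−s} ds, there exists c > 0 such that Y_{α,β}(x) ≪ exp(−c x^{1/(1+d')}) as x → ∞, where d' = ∑_{i=1}^r α_i. -/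
/-!
On the line `Re s = σ > 0` the integrand `Γ(s) ∏ Γ(αᵢ s + βᵢ) x^(-s)` is bounded by
`M(σ) x^(-σ) / (1 + t²)` with `M(σ) = (Γ(σ) + Γ(σ + 2)) ∏ Γ(αᵢ σ + Re βᵢ)`: each factor is bounded
by `Γ` of its real part, and `Γ(s) = Γ(s + 2) / (s (s + 1))` supplies the decay in `t = Im s`.
The integrand is holomorphic on `Re s > 0`, so the line of integration may be moved from `a` to any
`A > 0`, giving `|Y(x)| ≤ M(A) x^(-A) / 2`. From `Γ(y) ≤ y^y` one gets `M(A) ≤ (A^(1+d') K)^A` for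
large `A`, and `A = c x^(1/(1+d'))` with `c^(1+d') K = 1/e` turns the bound into `e^(-A) / 2`.
-/

open Complex MeasureTheory Set Filter Topology Interval
open scoped Real

namespace Complex

lemma norm_Gamma_le_Gamma_re {s : ℂ} (hs : 0 < s.re) : ‖Gamma s‖ ≤ Real.Gamma s.re := by
  rw [Gamma_eq_integral hs, Real.Gamma_eq_integral hs, GammaIntegral]
  refine norm_integral_le_of_norm_le (Real.GammaIntegral_convergent hs) ?_
  filter_upwards [ae_restrict_mem measurableSet_Ioi] with x (hx : 0 < x)
  simp [norm_cpow_eq_rpow_re_of_pos hx, norm_exp]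

lemma norm_Gamma_mul_one_add_sq_im_le {s : ℂ} (hs : 0 < s.re) :
    ‖Gamma s‖ * (1 + s.im ^ 2) ≤ Real.Gamma s.re + Real.Gamma (s.re + 2) := by
  have hs0 : s ≠ 0 := by rintro rfl; simp at hs
  have hs1 : s + 1 ≠ 0 := fun h => by
    have := congrArg re h; simp at this; linarith
  have hrec : Gamma (s + 2) = (s + 1) * s * Gamma s := by
    rw [show s + 2 = s + 1 + 1 by ring, Gamma_add_one _ hs1, Gamma_add_one _ hs0]; ring
  have him : s.im ^ 2 ≤ ‖s + 1‖ * ‖s‖ := by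
    rw [← sq_abs, sq]
    exact mul_le_mul (by simpa using abs_im_le_norm (s + 1)) (abs_im_le_norm s)
      (abs_nonneg _) (norm_nonneg _)
  have hdecay : ‖Gamma s‖ * s.im ^ 2 ≤ Real.Gamma (s.re + 2) := calc
    _ ≤ ‖Gamma s‖ * (‖s + 1‖ * ‖s‖) := by gcongr
    _ = ‖Gamma (s + 2)‖ := by rw [hrec, norm_mul, norm_mul]; ring
    _ ≤ _ := by simpa using norm_Gamma_le_Gamma_re (s := s + 2) (by simp; linarith)
  nlinarith [norm_Gamma_le_Gamma_re hs]

lemma differentiableAt_Gamma_of_re_pos {s : ℂ} (hs : 0 < s.re) :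
    DifferentiableAt ℂ Gamma s :=
  differentiableAt_Gamma s fun m h => by simp [h] at hs; linarith

lemma re_ofReal_mul_add_pos {a : ℝ} {b s : ℂ} (ha : 0 < a) (hb : 0 ≤ b.re) (hs : 0 < s.re) :
    0 < (a * s + b).re := by
  simp only [add_re, re_ofReal_mul]; positivity

end Complex

lemma Real.continuousAt_Gamma_of_pos {σ : ℝ} (hσ : 0 < σ) : ContinuousAt Real.Gamma σ :=
  (Real.differentiableAt_Gamma fun m h => by simp [h] at hσ; linarith).continuousAt

lemma Real.Gamma_le_rpow_self {y : ℝ} (hy : 2 ≤ y) : Real.Gamma y ≤ y ^ y := by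
  set n := ⌊y⌋₊
  have hn : (n : ℝ) ≤ y := Nat.floor_le (by linarith)
  have hn2 : (2 : ℝ) ≤ n := by exact_mod_cast Nat.le_floor (by exact_mod_cast hy)
  calc Real.Gamma y ≤ Real.Gamma (n + 1) :=
        Real.Gamma_strictMonoOn_Ici.monotoneOn (mem_Ici.mpr hy) (mem_Ici.mpr (by linarith))
          (Nat.lt_floor_add_one y).le
    _ = (n.factorial : ℝ) := Real.Gamma_nat_eq_factorial n
    _ ≤ (n : ℝ) ^ n := by exact_mod_cast Nat.factorial_le_pow n
    _ = (n : ℝ) ^ (n : ℝ) := (Real.rpow_natCast _ _).symm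
    _ ≤ y ^ (n : ℝ) := by gcongr
    _ ≤ y ^ y := Real.rpow_le_rpow_of_exponent_le (by linarith) hn

theorem integral_vertical_eq_of_differentiableOn_strip {E : Type*} [NormedAddCommGroup E]
    [NormedSpace ℂ E] {f : ℂ → E} {σ₁ σ₂ : ℝ}
    (hf : DifferentiableOn ℂ f (re ⁻¹' [[σ₁, σ₂]]))
    (h₁ : Integrable fun t : ℝ => f (σ₁ + t * I))
    (h₂ : Integrable fun t : ℝ => f (σ₂ + t * I))
    {g : ℝ → ℝ} (hg : Tendsto g (cocompact ℝ) (𝓝 0))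
    (hfg : ∀ σ ∈ [[σ₁, σ₂]], ∀ t : ℝ, ‖f (σ + t * I)‖ ≤ g t) :
    ∫ t : ℝ, f (σ₁ + t * I) = ∫ t : ℝ, f (σ₂ + t * I) := by
  set H : ℝ → E := fun T => ∫ σ in σ₁..σ₂, f (σ + T * I)
  have hH : Tendsto H (cocompact ℝ) (𝓝 0) := by
    refine squeeze_zero_norm (fun T => ?_) (by simpa using hg.mul_const |σ₂ - σ₁|)
    exact intervalIntegral.norm_integral_le_of_norm_le_const
      fun σ hσ => hfg σ (uIoc_subset_uIcc hσ) T
  have hV : ∀ σ : ℝ, Integrable (fun t : ℝ => f (σ + t * I)) →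
      Tendsto (fun T => ∫ t in -T..T, f (σ + t * I)) atTop
        (𝓝 (∫ t : ℝ, f (σ + t * I))) :=
    fun σ h => intervalIntegral_tendsto_integral h tendsto_neg_atTop_atBot tendsto_id
  have hrect : ∀ T : ℝ, I • (∫ t in -T..T, f (σ₁ + t * I)) =
      H (-T) - H T + I • ∫ t in -T..T, f (σ₂ + t * I) := by
    intro T
    have := integral_boundary_rect_eq_zero_of_differentiableOn f ⟨σ₁, -T⟩ ⟨σ₂, T⟩
      (hf.mono fun z hz => hz.1)
    exact (sub_eq_zero.mp (by simpa [H] using this)).symm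
  have hlim₁ := (hV σ₁ h₁).const_smul I
  have hlim₂ : Tendsto (fun T => H (-T) - H T + I • ∫ t in -T..T, f (σ₂ + t * I)) atTop
      (𝓝 (0 - 0 + I • ∫ t : ℝ, f (σ₂ + t * I))) :=
    ((hH.comp (tendsto_neg_atTop_atBot.mono_right atBot_le_cocompact)).sub
      (hH.mono_left atTop_le_cocompact)).add ((hV σ₂ h₂).const_smul I)
  rw [← funext hrect, zero_sub_zero, zero_add] at hlim₂
  exact smul_right_injective E I_ne_zero (tendsto_nhds_unique hlim₁ hlim₂)

/-- `log f(A) ≤ p A log A + O(A)` as `A → ∞`. -/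
def GammaGrowth (p : ℝ) (f : ℝ → ℝ) : Prop :=
  ∃ K > 0, ∀ᶠ A in atTop, f A ≤ (A ^ p * K) ^ A

namespace GammaGrowth

variable {p q : ℝ} {f g : ℝ → ℝ}

lemma add (hf : GammaGrowth p f) (hg : GammaGrowth p g) : GammaGrowth p (f + g) := by
  obtain ⟨K, hK, hfK⟩ := hf
  obtain ⟨L, hL, hgL⟩ := hg
  refine ⟨K + L, by positivity, ?_⟩
  filter_upwards [hfK, hgL, eventually_ge_atTop 1] with A hfA hgA hA
  calc f A + g A ≤ (A ^ p * K) ^ A + (A ^ p * L) ^ A := add_le_add hfA hgA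
    _ ≤ (A ^ p * K + A ^ p * L) ^ A :=
        Real.add_rpow_le_rpow_add (by positivity) (by positivity) hA
    _ = (A ^ p * (K + L)) ^ A := by ring_nf

lemma mul (hf : GammaGrowth p f) (hg : GammaGrowth q g) (hg₀ : ∀ᶠ A in atTop, 0 ≤ g A) :
    GammaGrowth (p + q) (f * g) := by
  obtain ⟨K, hK, hfK⟩ := hf
  obtain ⟨L, hL, hgL⟩ := hg
  refine ⟨K * L, by positivity, ?_⟩
  filter_upwards [hfK, hgL, hg₀, eventually_gt_atTop 0] with A hfA hgA hgA₀ hA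
  calc f A * g A ≤ (A ^ p * K) ^ A * (A ^ q * L) ^ A :=
        mul_le_mul hfA hgA hgA₀ (by positivity)
    _ = (A ^ (p + q) * (K * L)) ^ A := by
        rw [← Real.mul_rpow (by positivity) (by positivity), Real.rpow_add hA]; ring_nf

lemma prod {ι : Type*} (s : Finset ι) {p : ι → ℝ} {f : ι → ℝ → ℝ}
    (hf : ∀ i ∈ s, GammaGrowth (p i) (f i)) (hf₀ : ∀ i ∈ s, ∀ᶠ A in atTop, 0 ≤ f i A) :
    GammaGrowth (∑ i ∈ s, p i) (∏ i ∈ s, f i) := by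
  classical
  induction s using Finset.induction_on with
  | empty => exact ⟨1, one_pos, .of_forall fun A => by simp⟩
  | insert j s hj ih =>
    rw [Finset.sum_insert hj, Finset.prod_insert hj]
    refine (hf j (Finset.mem_insert_self j s)).mul
      (ih (fun i hi => hf i (Finset.mem_insert_of_mem hi))
        (fun i hi => hf₀ i (Finset.mem_insert_of_mem hi))) ?_
    filter_upwards [(Filter.eventually_all_finset s).mpr
      fun i hi => hf₀ i (Finset.mem_insert_of_mem hi)] with A hA
    simpa only [Finset.prod_apply] using Finset.prod_nonneg hA

end GammaGrowth

lemma gammaGrowth_Gamma_mul_add {α b : ℝ} (hα : 0 < α) (hb : 0 ≤ b) :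
    GammaGrowth α fun A => Real.Gamma (α * A + b) := by
  set c := α + b
  have hc : 0 < c := by positivity
  refine ⟨c ^ α * Real.exp (c * b), by positivity, ?_⟩
  filter_upwards [eventually_ge_atTop 1, eventually_ge_atTop (2 / α)] with A hA hAα
  have hy : 2 ≤ α * A + b := by
    have := (div_le_iff₀' hα).mp hAα; linarith
  have hyc : α * A + b ≤ c * A := by nlinarith
  have hcA : 0 < c * A := by positivity
  calc Real.Gamma (α * A + b) ≤ (α * A + b) ^ (α * A + b) := Real.Gamma_le_rpow_self hy
    _ ≤ (c * A) ^ (α * A + b) := by gcongr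
    _ = ((c * A) ^ α) ^ A * (c * A) ^ b := by
        rw [Real.rpow_add hcA, ← Real.rpow_mul hcA.le, mul_comm α A]
    _ ≤ ((c * A) ^ α) ^ A * Real.exp (c * A) ^ b := by
        gcongr; linarith [Real.add_one_le_exp (c * A)]
    _ = (A ^ α * (c ^ α * Real.exp (c * b))) ^ A := by
        rw [← Real.exp_mul, show c * A * b = c * b * A by ring, Real.exp_mul,
          ← Real.mul_rpow (by positivity) (by positivity),
          Real.mul_rpow hc.le (by positivity)]
        ring_nf

section MellinBarnes

variable {r : ℕ}

noncomputable def mellinBarnesIntegrand (α : Fin r → ℝ) (β : Fin r → ℂ) (x : ℝ) (s : ℂ) :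
    ℂ :=
  Gamma s * (∏ i, Gamma (α i * s + β i)) * (x : ℂ) ^ (-s)

noncomputable def mellinBarnesMajorant (α : Fin r → ℝ) (β : Fin r → ℂ) (σ : ℝ) : ℝ :=
  (Real.Gamma σ + Real.Gamma (σ + 2)) * ∏ i, Real.Gamma (α i * σ + (β i).re)

variable {α : Fin r → ℝ} {β : Fin r → ℂ}

lemma differentiableOn_mellinBarnesIntegrand (hα : ∀ i, 0 < α i) (hβ : ∀ i, 0 ≤ (β i).re)
    {x : ℝ} (hx : 0 < x) :
    DifferentiableOn ℂ (mellinBarnesIntegrand α β x) {s | 0 < s.re} := by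
  intro s (hs : 0 < s.re)
  refine DifferentiableAt.differentiableWithinAt ?_
  refine ((differentiableAt_Gamma_of_re_pos hs).mul (DifferentiableAt.fun_finsetProd
    fun i _ => ?_)).mul (differentiableAt_id.neg.const_cpow (.inl (by exact_mod_cast hx.ne')))
  exact (differentiableAt_Gamma_of_re_pos (re_ofReal_mul_add_pos (hα i) (hβ i) hs)).comp s
    (by fun_prop)

lemma norm_mellinBarnesIntegrand_le (hα : ∀ i, 0 < α i) (hβ : ∀ i, 0 ≤ (β i).re)
    {x σ : ℝ} (hx : 0 < x) (hσ : 0 < σ) (t : ℝ) :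
    ‖mellinBarnesIntegrand α β x (σ + t * I)‖ ≤
      mellinBarnesMajorant α β σ * x ^ (-σ) * (1 + t ^ 2)⁻¹ := by
  set s : ℂ := σ + t * I
  have hs : 0 < s.re := by simpa [s] using hσ
  have hΓ : ‖Gamma s‖ ≤ (Real.Gamma σ + Real.Gamma (σ + 2)) * (1 + t ^ 2)⁻¹ := by
    rw [← div_eq_mul_inv, le_div_iff₀ (by positivity)]
    simpa [s] using norm_Gamma_mul_one_add_sq_im_le hs
  have hprod : ‖∏ i, Gamma (α i * s + β i)‖ ≤ ∏ i, Real.Gamma (α i * σ + (β i).re) := by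
    rw [norm_prod]
    refine Finset.prod_le_prod (fun i _ => norm_nonneg _) fun i _ => ?_
    simpa [s] using norm_Gamma_le_Gamma_re (re_ofReal_mul_add_pos (hα i) (hβ i) hs)
  have hpow : ‖(x : ℂ) ^ (-s)‖ = x ^ (-σ) := by
    simp [norm_cpow_eq_rpow_re_of_pos hx, s]
  rw [mellinBarnesIntegrand, norm_mul, norm_mul, hpow, mellinBarnesMajorant]
  calc _ ≤ (Real.Gamma σ + Real.Gamma (σ + 2)) * (1 + t ^ 2)⁻¹ *
        (∏ i, Real.Gamma (α i * σ + (β i).re)) * x ^ (-σ) := by gcongr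
    _ = _ := by ring

lemma integrable_mellinBarnesIntegrand (hα : ∀ i, 0 < α i) (hβ : ∀ i, 0 ≤ (β i).re)
    {x σ : ℝ} (hx : 0 < x) (hσ : 0 < σ) :
    Integrable fun t : ℝ => mellinBarnesIntegrand α β x (σ + t * I) := by
  have hcont : Continuous fun t : ℝ => mellinBarnesIntegrand α β x (σ + t * I) :=
    (differentiableOn_mellinBarnesIntegrand hα hβ hx).continuousOn.comp_continuous
      (by fun_prop) fun t => by simpa using hσ
  exact (integrable_inv_one_add_sq.const_mul _).mono' hcont.aestronglyMeasurable
    (.of_forall (norm_mellinBarnesIntegrand_le hα hβ hx hσ))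

lemma continuousOn_mellinBarnesMajorant (hα : ∀ i, 0 < α i) (hβ : ∀ i, 0 ≤ (β i).re) :
    ContinuousOn (mellinBarnesMajorant α β) (Ioi 0) := by
  intro σ (hσ : 0 < σ)
  refine ContinuousAt.continuousWithinAt ?_
  have hΓ : ∀ f : ℝ → ℝ, ContinuousAt f σ → 0 < f σ →
      ContinuousAt (fun σ => Real.Gamma (f σ)) σ :=
    fun f hf hfσ => (Real.continuousAt_Gamma_of_pos hfσ).comp hf
  refine ((hΓ _ continuousAt_id hσ).add (hΓ (· + 2) (by fun_prop) (by linarith))).mul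
    (tendsto_finsetProd _ fun i _ => hΓ _ (by fun_prop)
      (by have := hα i; have := hβ i; positivity))

lemma integral_mellinBarnesIntegrand_eq (hα : ∀ i, 0 < α i) (hβ : ∀ i, 0 ≤ (β i).re)
    {x σ₁ σ₂ : ℝ} (hx : 0 < x) (hσ₁ : 0 < σ₁) (hσ₂ : 0 < σ₂) :
    ∫ t : ℝ, mellinBarnesIntegrand α β x (σ₁ + t * I) =
      ∫ t : ℝ, mellinBarnesIntegrand α β x (σ₂ + t * I) := by
  have hpos : [[σ₁, σ₂]] ⊆ Ioi 0 := fun σ hσ => lt_of_lt_of_le (lt_min hσ₁ hσ₂) hσ.1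
  have hpow : ContinuousOn (fun σ : ℝ => x ^ (-σ)) [[σ₁, σ₂]] :=
    ((Real.continuous_const_rpow hx.ne').comp continuous_neg).continuousOn
  obtain ⟨C, hC⟩ := isCompact_uIcc.exists_bound_of_continuousOn
    (((continuousOn_mellinBarnesMajorant hα hβ).mono hpos).mul hpow)
  refine integral_vertical_eq_of_differentiableOn_strip
    ((differentiableOn_mellinBarnesIntegrand hα hβ hx).mono fun s hs => hpos hs)
    (integrable_mellinBarnesIntegrand hα hβ hx hσ₁)
    (integrable_mellinBarnesIntegrand hα hβ hx hσ₂)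
    (g := fun t => C * (1 + t ^ 2)⁻¹) ?_ fun σ hσ t => ?_
  · have h := (tendsto_pow_atTop two_ne_zero).comp (tendsto_norm_cocompact_atTop (E := ℝ))
    simpa using ((tendsto_atTop_add_const_left _ 1 h).inv_tendsto_atTop).const_mul C
  · refine (norm_mellinBarnesIntegrand_le hα hβ hx (hpos hσ) t).trans ?_
    gcongr
    exact (le_abs_self _).trans (hC σ hσ)

lemma norm_integral_mellinBarnesIntegrand_le (hα : ∀ i, 0 < α i) (hβ : ∀ i, 0 ≤ (β i).re)
    {x a σ : ℝ} (hx : 0 < x) (ha : 0 < a) (hσ : 0 < σ) :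
    ‖∫ t : ℝ, mellinBarnesIntegrand α β x (a + t * I)‖ ≤
      mellinBarnesMajorant α β σ * x ^ (-σ) * π := by
  rw [integral_mellinBarnesIntegrand_eq hα hβ hx ha hσ]
  calc _ ≤ ∫ t : ℝ, mellinBarnesMajorant α β σ * x ^ (-σ) * (1 + t ^ 2)⁻¹ :=
        norm_integral_le_of_norm_le (integrable_inv_one_add_sq.const_mul _)
          (.of_forall (norm_mellinBarnesIntegrand_le hα hβ hx hσ))
    _ = _ := by rw [integral_const_mul, integral_univ_inv_one_add_sq]

lemma gammaGrowth_mellinBarnesMajorant (hα : ∀ i, 0 < α i) (hβ : ∀ i, 0 ≤ (β i).re) :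
    GammaGrowth (1 + ∑ i, α i) (mellinBarnesMajorant α β) := by
  have hΓ₀ : ∀ a b : ℝ, 0 < a → 0 ≤ b → ∀ᶠ A in atTop, 0 ≤ Real.Gamma (a * A + b) :=
    fun a b ha hb => (eventually_ge_atTop 0).mono fun A hA =>
      Real.Gamma_nonneg_of_nonneg (by positivity)
  have hfirst := (gammaGrowth_Gamma_mul_add one_pos le_rfl).add
    (gammaGrowth_Gamma_mul_add one_pos zero_le_two)
  have hprod := GammaGrowth.prod Finset.univ
    (fun i _ => gammaGrowth_Gamma_mul_add (hα i) (hβ i)) fun i _ => hΓ₀ _ _ (hα i) (hβ i)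
  convert hfirst.mul hprod ?_ using 1
  · ext σ; simp [mellinBarnesMajorant, Finset.prod_apply]
  · filter_upwards [(eventually_all_finset _).mpr fun i _ => hΓ₀ _ _ (hα i) (hβ i)]
      with A hA
    simpa only [Finset.prod_apply] using Finset.prod_nonneg hA

end MellinBarnes

lemma rpow_mul_rpow_neg_eq_exp_neg {p K x A : ℝ} (hx : 0 < x)
    (h : A ^ p * K = x * Real.exp (-1)) : (A ^ p * K) ^ A * x ^ (-A) = Real.exp (-A) := by
  rw [h, Real.mul_rpow hx.le (Real.exp_pos _).le, ← Real.exp_mul, Real.rpow_neg hx.le,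
    mul_right_comm, mul_inv_cancel₀ (by positivity), neg_one_mul, one_mul]

open Asymptotics

theorem stmt_10_general (r : ℕ) (α : Fin r → ℝ) (hα : ∀ i, 0 < α i)
    (β : Fin r → ℂ) (hβ : ∀ i, 0 ≤ (β i).re) (a : ℝ) (ha : 0 < a)
    (Y : ℝ → ℂ)
    (hY : Y = fun x : ℝ => ((1 / (2 * Real.pi) : ℝ) : ℂ) *
      ∫ t : ℝ,
        Complex.Gamma ((a : ℂ) + t * Complex.I) *
          (∏ i, Complex.Gamma ((α i : ℂ) * ((a : ℂ) + t * Complex.I) + β i)) *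
          (x : ℂ) ^ (-((a : ℂ) + t * Complex.I))) :
    ∃ c > (0 : ℝ),
      Y =O[Filter.atTop] fun x : ℝ => Real.exp (-c * x ^ (1 / (1 + ∑ i, α i))) := by
  set p := 1 + ∑ i, α i
  have hp : 0 < p := add_pos_of_pos_of_nonneg one_pos (Finset.sum_nonneg fun i _ => (hα i).le)
  obtain ⟨K, hK, hM⟩ := gammaGrowth_mellinBarnesMajorant hα hβ
  set c := (K * Real.exp 1) ^ (-p⁻¹)
  have hc : 0 < c := by positivity
  have hA : Tendsto (fun x : ℝ => c * x ^ (1 / p)) atTop atTop :=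
    (tendsto_rpow_atTop (by positivity)).const_mul_atTop hc
  refine ⟨c, hc, IsBigO.of_bound (1 / 2) ?_⟩
  filter_upwards [hA.eventually hM, hA.eventually_ge_atTop a, eventually_gt_atTop 0]
    with x hMx haA hx
  set A := c * x ^ (1 / p)
  have hA₀ : 0 < A := ha.trans_le haA
  have hbase : A ^ p * K = x * Real.exp (-1) := by
    rw [Real.mul_rpow hc.le (by positivity), ← Real.rpow_mul hx.le,
      ← Real.rpow_mul (by positivity), one_div, inv_mul_cancel₀ hp.ne', neg_mul,
      inv_mul_cancel₀ hp.ne', Real.rpow_one, Real.rpow_neg_one, Real.exp_neg]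
    field_simp
  calc ‖Y x‖ = (2 * π)⁻¹ * ‖∫ t : ℝ, mellinBarnesIntegrand α β x (a + t * I)‖ := by
        rw [hY, norm_mul, norm_real, Real.norm_of_nonneg (by positivity), one_div]; rfl
    _ ≤ (2 * π)⁻¹ * (mellinBarnesMajorant α β A * x ^ (-A) * π) := by
        gcongr; exact norm_integral_mellinBarnesIntegrand_le hα hβ hx ha hA₀
    _ = mellinBarnesMajorant α β A * x ^ (-A) / 2 := by field_simp
    _ ≤ (A ^ p * K) ^ A * x ^ (-A) / 2 := by gcongr
    _ = 1 / 2 * ‖Real.exp (-c * x ^ (1 / p))‖ := by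
        rw [rpow_mul_rpow_neg_eq_exp_neg hx hbase, Real.norm_of_nonneg (Real.exp_pos _).le,
          neg_mul]
        ring

/-- Exponential decay of Y_{α,β}(x) as x → ∞, with exponent 1/(1+d'). -/
theorem stmt_10 (r : ℕ) (α : Fin r → ℝ) (hα : ∀ i, 0 < α i)
    (β : Fin r → ℂ) (hβ : ∀ i, 0 ≤ (β i).re) (a : ℝ) (ha : 0 < a)
    (haβ : ∀ i, 0 < ((α i : ℂ) * (a : ℂ) + β i).re)
    (Y : ℝ → ℂ)
    (hY : Y = fun x : ℝ => ((1 / (2 * Real.pi) : ℝ) : ℂ) *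
      ∫ t : ℝ,
        Complex.Gamma ((a : ℂ) + t * Complex.I) *
          (∏ i, Complex.Gamma ((α i : ℂ) * ((a : ℂ) + t * Complex.I) + β i)) *
          (x : ℂ) ^ (-((a : ℂ) + t * Complex.I))) :
    ∃ c > (0 : ℝ),
      Y =O[Filter.atTop] fun x : ℝ => Real.exp (-c * x ^ (1 / (1 + ∑ i, α i))) :=
  stmt_10_general r α hα β hβ a ha Y hY
end

section
/- Fubini for inverse-Mellin against a Dirichlet series: let λ_n ↑ ∞ be positive reals, (a_n) complex with ∑ |a_n| λ_n^{−a} < ∞ for some a > 0, and let α_i > 0, β_i ∈ ℂ with Re(α_i a + β_i) > 0 for i = 1,…,r. Then for every x > 0, (1/(2πi)) ∫_{(a)} (∑_{n≥1} a_n λ_n^{−s}) ∏_{i=1}^r Γ(α_i s + β_i) x^{−s} ds = ∑_{n≥1} a_n Z_{α,β}(λ_n x), where Z_{α,β}(y) = (1/(2πi)) ∫_{(a)} ∏_{i=1}^r Γ(α_i s + β_i) y^{−s} ds, and the series on the right converges absolutely. -/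
/-!
On the line `Re s = a` every factor `Γ(αᵢ s + βᵢ)` is bounded by `Γ(Re(αᵢ a + βᵢ))`, and any one
of them decays like `(1 + t²)⁻¹` because `Γ(z + 2) = (z + 1) z Γ(z)`; so for `r > 0` the Gamma
product is integrable in `t`. As `|λₙ^(-s)| = λₙ^(-a)` on the line, the double series-integral is
dominated by `(∑ ‖cₙ‖ λₙ^(-a)) · ∫ |Γ-product|`, and dominated convergence swaps sum and integral.

For `r = 0` the integrand defining `Z` has constant modulus, so `Z = 0` (the Bochner integral of
a non-integrable function is `0`), and the left side vanishes as well: an absolutely convergent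
Dirichlet series that is integrable along a vertical line is identically zero, since its Bohr mean
value against `λₙ^(it)` is `cₙ λₙ^(-a)`, whereas the mean value of an integrable function is `0`.
-/

open MeasureTheory Complex Filter Topology Interval

namespace Complex

theorem norm_Gamma_le_Gamma_re_s14 {z : ℂ} (hz : 0 < z.re) : ‖Gamma z‖ ≤ Real.Gamma z.re := by
  rw [Gamma_eq_integral hz, Real.Gamma_eq_integral hz]
  refine (norm_integral_le_integral_norm _).trans_eq
    (setIntegral_congr_fun measurableSet_Ioi fun x hx => ?_)
  rw [norm_mul, norm_real, Real.norm_of_nonneg (Real.exp_nonneg _),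
    norm_cpow_eq_rpow_re_of_pos hx, sub_re, one_re]

theorem norm_Gamma_mul_one_add_sq_im_le_s14 {z : ℂ} (hz : 0 < z.re) :
    ‖Gamma z‖ * (1 + z.im ^ 2) ≤ Real.Gamma z.re + Real.Gamma (z.re + 2) := by
  have hz₀ : z ≠ 0 := fun h => by simp [h] at hz
  have hz₁ : z + 1 ≠ 0 := fun h => by
    have := congrArg re h
    simp only [add_re, one_re, zero_re] at this
    linarith
  have hGamma : Gamma (z + 2) = (z + 1) * z * Gamma z := by
    rw [show z + 2 = z + 1 + 1 by ring, Gamma_add_one _ hz₁, Gamma_add_one _ hz₀, mul_assoc]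
  have him : z.im ^ 2 ≤ ‖z + 1‖ * ‖z‖ := by
    rw [sq, ← abs_mul_abs_self]
    exact mul_le_mul (by simpa using abs_im_le_norm (z + 1)) (abs_im_le_norm z)
      (abs_nonneg _) (norm_nonneg _)
  have h₂ : ‖Gamma z‖ * z.im ^ 2 ≤ Real.Gamma (z.re + 2) :=
    calc ‖Gamma z‖ * z.im ^ 2 ≤ ‖Gamma z‖ * (‖z + 1‖ * ‖z‖) := by gcongr
      _ = ‖Gamma (z + 2)‖ := by rw [hGamma, norm_mul, norm_mul]; ring
      _ ≤ Real.Gamma (z.re + 2) := by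
        simpa using norm_Gamma_le_Gamma_re_s14 (z := z + 2) (by simp; linarith)
  rw [mul_add, mul_one]
  exact add_le_add (norm_Gamma_le_Gamma_re_s14 hz) h₂

end Complex

section GammaVertical

variable {α a : ℝ} {β : ℂ}

theorem re_ofReal_mul_vertical_add (α a t : ℝ) (β : ℂ) :
    ((α : ℂ) * (a + t * I) + β).re = ((α : ℂ) * a + β).re := by
  simp

theorem im_ofReal_mul_vertical_add (α a t : ℝ) (β : ℂ) :
    ((α : ℂ) * (a + t * I) + β).im = α * t + β.im := by
  simp

theorem continuous_Gamma_ofReal_mul_vertical_add (h : 0 < ((α : ℂ) * a + β).re) :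
    Continuous fun t : ℝ => Gamma (α * (a + t * I) + β) := by
  refine continuous_iff_continuousAt.mpr fun t => ?_
  have hpole : ∀ m : ℕ, (α : ℂ) * (a + t * I) + β ≠ -m := fun m hm => by
    have := congrArg re hm
    rw [re_ofReal_mul_vertical_add] at this
    simp only [neg_re, natCast_re] at this
    linarith [m.cast_nonneg (α := ℝ)]
  exact (differentiableAt_Gamma _ hpole).continuousAt.comp
    (f := fun t : ℝ => (α : ℂ) * (a + t * I) + β) (by fun_prop)

theorem norm_Gamma_ofReal_mul_vertical_add_le (h : 0 < ((α : ℂ) * a + β).re) (t : ℝ) :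
    ‖Gamma (α * (a + t * I) + β)‖ ≤ Real.Gamma ((α : ℂ) * a + β).re := by
  simpa [re_ofReal_mul_vertical_add] using
    norm_Gamma_le_Gamma_re_s14 (z := α * (a + t * I) + β) (by rwa [re_ofReal_mul_vertical_add])

theorem integrable_Gamma_ofReal_mul_vertical_add (hα : α ≠ 0) (h : 0 < ((α : ℂ) * a + β).re) :
    Integrable fun t : ℝ => Gamma (α * (a + t * I) + β) := by
  set σ := ((α : ℂ) * a + β).re
  have hdecay : Integrable fun t : ℝ => (1 + (α * t + β.im) ^ 2)⁻¹ := by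
    simpa using (integrable_inv_one_add_sq.comp_add_right β.im).comp_mul_left' hα
  refine Integrable.mono' (hdecay.const_mul (Real.Gamma σ + Real.Gamma (σ + 2)))
    (continuous_Gamma_ofReal_mul_vertical_add h).aestronglyMeasurable (.of_forall fun t => ?_)
  have := norm_Gamma_mul_one_add_sq_im_le_s14 (z := α * (a + t * I) + β)
    (by rwa [re_ofReal_mul_vertical_add])
  rw [re_ofReal_mul_vertical_add, im_ofReal_mul_vertical_add] at this
  rwa [← div_eq_mul_inv, le_div_iff₀ (by positivity)]

theorem integrable_prod_Gamma_ofReal_mul_vertical_add {ι : Type*} [Fintype ι] {α : ι → ℝ}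
    {β : ι → ℂ} (h : ∀ i, 0 < ((α i : ℂ) * a + β i).re) {i₀ : ι} (hi₀ : α i₀ ≠ 0) :
    Integrable fun t : ℝ => ∏ i, Gamma (α i * (a + t * I) + β i) := by
  classical
  have hrest := (integrable_Gamma_ofReal_mul_vertical_add hi₀ (h i₀)).bdd_mul
    (c := ∏ i ∈ Finset.univ.erase i₀, Real.Gamma ((α i : ℂ) * a + β i).re)
    (f := fun t : ℝ => ∏ i ∈ Finset.univ.erase i₀, Gamma (α i * (a + t * I) + β i))
    (continuous_finsetProd _ fun i _ =>
      continuous_Gamma_ofReal_mul_vertical_add (h i)).aestronglyMeasurable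
    (.of_forall fun t => (Finset.norm_prod_le _ _).trans <|
      Finset.prod_le_prod (fun _ _ => norm_nonneg _) fun i _ =>
        norm_Gamma_ofReal_mul_vertical_add_le (h i) t)
  refine hrest.congr (.of_forall fun t => (mul_comm _ _).trans ?_)
  exact Finset.mul_prod_erase _ (fun i => Gamma (α i * (a + t * I) + β i)) (Finset.mem_univ i₀)

end GammaVertical

section MeanValue

variable {E : Type*} [NormedAddCommGroup E] [NormedSpace ℝ E]

theorem norm_intervalAverage_le_of_norm_le_const {a b C : ℝ} {f : ℝ → E} (hab : a ≠ b)
    (h : ∀ x ∈ Ι a b, ‖f x‖ ≤ C) : ‖⨍ x in a..b, f x‖ ≤ C := by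
  have hba : 0 < |b - a| := abs_pos.mpr (sub_ne_zero.mpr hab.symm)
  rw [interval_average_eq, norm_smul, norm_inv, Real.norm_eq_abs, inv_mul_le_iff₀ hba, mul_comm]
  exact intervalIntegral.norm_integral_le_of_norm_le_const h

theorem tendsto_intervalAverage_neg_self_of_norm_integral_le {f : ℝ → E} {C : ℝ}
    (h : ∀ T, ‖∫ t in -T..T, f t‖ ≤ C) :
    Tendsto (fun T => ⨍ t in -T..T, f t) atTop (𝓝 0) := by
  have hC : Tendsto (fun T : ℝ => (2 * T)⁻¹ * C) atTop (𝓝 0) := by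
    simpa using (tendsto_inv_atTop_zero.comp (tendsto_id.const_mul_atTop two_pos)).mul_const C
  refine squeeze_zero_norm' ?_ hC
  filter_upwards [eventually_gt_atTop 0] with T hT
  rw [interval_average_eq, norm_smul, show T - -T = 2 * T by ring, norm_inv,
    Real.norm_of_nonneg (by positivity)]
  exact mul_le_mul_of_nonneg_left (h T) (by positivity)

theorem tendsto_intervalAverage_neg_self_of_integrable {f : ℝ → E} (hf : Integrable f) :
    Tendsto (fun T => ⨍ t in -T..T, f t) atTop (𝓝 0) :=
  tendsto_intervalAverage_neg_self_of_norm_integral_le fun _ =>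
    intervalIntegral.norm_integral_le_integral_norm_uIoc.trans <|
      setIntegral_le_integral hf.norm (.of_forall fun _ => norm_nonneg _)

end MeanValue

theorem norm_integral_exp_ofReal_mul_I_le {δ : ℝ} (hδ : δ ≠ 0) (a b : ℝ) :
    ‖∫ t in a..b, exp (↑(t * δ) * I)‖ ≤ 2 / |δ| := by
  have hc : (δ : ℂ) * I ≠ 0 := mul_ne_zero (ofReal_ne_zero.mpr hδ) I_ne_zero
  have hexp : ∀ t : ℝ, exp (↑(t * δ) * I) = exp (δ * I * t) := fun t => by push_cast; ring_nf
  simp_rw [hexp, integral_exp_mul_complex hc, norm_div, norm_mul, norm_real, norm_I, mul_one,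
    Real.norm_eq_abs]
  gcongr
  refine (norm_sub_le _ _).trans_eq ?_
  simp only [show ∀ t : ℝ, (δ : ℂ) * I * t = ↑(t * δ) * I from fun t => by push_cast; ring,
    norm_exp_ofReal_mul_I]
  norm_num

theorem tendsto_intervalAverage_exp_ofReal_mul_I (δ : ℝ) :
    Tendsto (fun T : ℝ => ⨍ t in -T..T, exp (↑(t * δ) * I)) atTop
      (𝓝 (if δ = 0 then 1 else 0)) := by
  split_ifs with hδ
  · refine tendsto_const_nhds.congr' ?_
    filter_upwards [eventually_gt_atTop 0] with T hT
    have : (T : ℂ) ≠ 0 := ofReal_ne_zero.mpr hT.ne'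
    simp only [hδ, mul_zero, ofReal_zero, zero_mul, exp_zero, interval_average_eq, sub_neg_eq_add,
      intervalIntegral.integral_const, real_smul, ofReal_add, mul_one, smul_add, ofReal_inv]
    field_simp
  · exact tendsto_intervalAverage_neg_self_of_norm_integral_le fun T =>
      norm_integral_exp_ofReal_mul_I_le hδ (-T) T

theorem intervalAverage_tsum_mul_exp {ι : Type*} [Countable ι] {b : ι → ℂ}
    (hb : Summable (‖b ·‖)) (μ : ι → ℝ) (T : ℝ) :
    ⨍ t in -T..T, ∑' m, b m * exp (↑(t * μ m) * I) =
      ∑' m, b m * ⨍ t in -T..T, exp (↑(t * μ m) * I) := by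
  have hsum := intervalIntegral.hasSum_integral_of_dominated_convergence
    (F := fun m (t : ℝ) => b m * exp (↑(t * μ m) * I)) (a := -T) (b := T) (μ := volume)
    (fun m _ => ‖b m‖) (fun m => (by fun_prop : Continuous _).aestronglyMeasurable)
    (fun m => .of_forall fun t _ => by rw [norm_mul, norm_exp_ofReal_mul_I, mul_one])
    (.of_forall fun _ _ => hb) intervalIntegrable_const
    (.of_forall fun t _ => (hb.of_norm_bounded fun m => by
      rw [norm_mul, norm_exp_ofReal_mul_I, mul_one]).hasSum)
  rw [interval_average_eq, ← (hsum.const_smul (T - -T)⁻¹).tsum_eq]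
  refine tsum_congr fun m => ?_
  rw [interval_average_eq, intervalIntegral.integral_const_mul, mul_smul_comm]

theorem eq_zero_of_integrable_tsum_mul_exp {ι : Type*} [Countable ι] {b : ι → ℂ} {μ : ι → ℝ}
    (hμ : Function.Injective μ) (hb : Summable (‖b ·‖))
    (hF : Integrable fun t : ℝ => ∑' m, b m * exp (↑(t * μ m) * I)) : b = 0 := by
  funext n
  rw [Pi.zero_apply]
  set F := fun t : ℝ => ∑' m, b m * exp (↑(t * μ m) * I)
  have hshift : ∀ t : ℝ, F t * exp (↑(t * -μ n) * I) = ∑' m, b m * exp (↑(t * (μ m - μ n)) * I) :=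
    fun t => by
      rw [← tsum_mul_right]
      refine tsum_congr fun m => ?_
      rw [mul_assoc, ← exp_add]
      push_cast; ring_nf
  have hzero : Tendsto (fun T => ⨍ t in -T..T, F t * exp (↑(t * -μ n) * I)) atTop (𝓝 0) :=
    tendsto_intervalAverage_neg_self_of_integrable <| hF.mul_bdd (c := 1)
      (by fun_prop : Continuous _).aestronglyMeasurable
      (.of_forall fun t => (norm_exp_ofReal_mul_I _).le)
  have hcoeff : Tendsto (fun T => ⨍ t in -T..T, F t * exp (↑(t * -μ n) * I)) atTop (𝓝 (b n)) := by
    simp_rw [hshift, intervalAverage_tsum_mul_exp hb]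
    have hlim := tendsto_tsum_of_dominated_convergence (𝓕 := atTop) hb
      (fun m => (tendsto_intervalAverage_exp_ofReal_mul_I (μ m - μ n)).const_mul (b m)) ?_
    · convert hlim using 2
      rw [tsum_eq_single n (fun m hm => by simp [sub_eq_zero, hμ.ne hm])]
      simp
    · filter_upwards [eventually_gt_atTop 0] with T hT m
      rw [norm_mul]
      exact mul_le_of_le_one_right (norm_nonneg _) <|
        norm_intervalAverage_le_of_norm_le_const (by linarith) fun t _ =>
          (norm_exp_ofReal_mul_I _).le
  exact tendsto_nhds_unique hcoeff hzero

section DirichletSeries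

variable {ι : Type*} {a : ℝ} {c : ι → ℂ}

theorem ofReal_cpow_neg_vertical {y : ℝ} (hy : 0 < y) (a t : ℝ) :
    (y : ℂ) ^ (-((a : ℂ) + t * I)) = ((y ^ (-a) : ℝ) : ℂ) * exp (↑(t * -Real.log y) * I) := by
  rw [cpow_def_of_ne_zero (ofReal_ne_zero.mpr hy.ne'), ← ofReal_log hy.le,
    Real.rpow_def_of_pos hy, ofReal_exp, ← exp_add]
  push_cast
  ring_nf

theorem norm_ofReal_cpow_neg_vertical {y : ℝ} (hy : 0 < y) (a t : ℝ) :
    ‖(y : ℂ) ^ (-((a : ℂ) + t * I))‖ = y ^ (-a) := by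
  simp [norm_cpow_eq_rpow_re_of_pos hy]

theorem integral_ofReal_cpow_neg_vertical {y : ℝ} (hy : 0 < y) (a : ℝ) :
    ∫ t : ℝ, (y : ℂ) ^ (-((a : ℂ) + t * I)) = 0 := by
  refine integral_undef fun h => ?_
  have := h.norm
  simp_rw [norm_ofReal_cpow_neg_vertical hy, integrable_const_iff] at this
  exact this.elim (Real.rpow_pos_of_pos hy _).ne' fun h => by simpa using h.measure_univ_lt_top

theorem tsum_mul_ofReal_cpow_mul_ofReal_cpow {lam : ι → ℝ} (hlam : ∀ n, 0 ≤ lam n) {x : ℝ}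
    (hx : 0 ≤ x) (c : ι → ℂ) (s : ℂ) :
    (∑' n, c n * (lam n : ℂ) ^ s) * (x : ℂ) ^ s = ∑' n, c n * ((lam n * x : ℝ) : ℂ) ^ s := by
  rw [← tsum_mul_right]
  refine tsum_congr fun n => ?_
  rw [ofReal_mul, mul_cpow_ofReal_nonneg (hlam n) hx, mul_assoc]

variable [Countable ι] {y : ι → ℝ}

theorem eq_zero_of_integrable_tsum_mul_ofReal_cpow (hy : Function.Injective y)
    (hpos : ∀ n, 0 < y n) (hc : Summable fun n => ‖c n‖ * y n ^ (-a))
    (hI : Integrable fun t : ℝ => ∑' n, c n * (y n : ℂ) ^ (-((a : ℂ) + t * I))) : c = 0 := by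
  have hlog : Function.Injective fun n => -Real.log (y n) := fun m n h =>
    hy <| Real.log_injOn_pos (hpos m) (hpos n) (neg_inj.mp h)
  have hb : Summable fun n => ‖c n * ((y n ^ (-a) : ℝ) : ℂ)‖ := by
    simpa [abs_of_pos (Real.rpow_pos_of_pos (hpos _) _)] using hc
  have hzero := eq_zero_of_integrable_tsum_mul_exp hlog hb <| by
    simpa only [ofReal_cpow_neg_vertical (hpos _), mul_assoc] using hI
  funext n
  simpa [(Real.rpow_pos_of_pos (hpos n) _).ne'] using congrFun hzero n

theorem integral_tsum_mul_ofReal_cpow_eq_zero (hy : Function.Injective y) (hpos : ∀ n, 0 < y n)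
    (hc : Summable fun n => ‖c n‖ * y n ^ (-a)) :
    ∫ t : ℝ, ∑' n, c n * (y n : ℂ) ^ (-((a : ℂ) + t * I)) = 0 := by
  by_cases hI : Integrable fun t : ℝ => ∑' n, c n * (y n : ℂ) ^ (-((a : ℂ) + t * I))
  · simp [eq_zero_of_integrable_tsum_mul_ofReal_cpow hy hpos hc hI]
  · exact integral_undef hI

theorem hasSum_integral_tsum_mul_ofReal_cpow_mul {G : ℝ → ℂ} (hG : Integrable G)
    (hpos : ∀ n, 0 < y n) (hc : Summable fun n => ‖c n‖ * y n ^ (-a)) :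
    HasSum (fun n => c n * ∫ t : ℝ, G t * (y n : ℂ) ^ (-((a : ℂ) + t * I)))
      (∫ t : ℝ, (∑' n, c n * (y n : ℂ) ^ (-((a : ℂ) + t * I))) * G t) := by
  set F : ι → ℝ → ℂ := fun n t => c n * (y n : ℂ) ^ (-((a : ℂ) + t * I)) * G t
  have hF_norm : ∀ n t, ‖F n t‖ = ‖c n‖ * y n ^ (-a) * ‖G t‖ := fun n t => by
    rw [norm_mul, norm_mul, norm_ofReal_cpow_neg_vertical (hpos n)]
  have hF_int : ∀ n, Integrable (F n) := fun n =>
    hG.bdd_mul (continuous_const.mul <| continuous_const.cpow (by fun_prop) fun _ =>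
        .inl (by simpa using hpos n)).aestronglyMeasurable
      (.of_forall fun t => by rw [norm_mul, norm_ofReal_cpow_neg_vertical (hpos n)])
  have hF_integral : ∀ n, ∫ t, F n t = c n * ∫ t : ℝ, G t * (y n : ℂ) ^ (-((a : ℂ) + t * I)) :=
    fun n => by
      rw [← integral_const_mul]
      congr 1 with t
      ring
  have hsum := hasSum_integral_of_summable_integral_norm hF_int <| by
    simpa only [hF_norm, integral_const_mul] using hc.mul_right (∫ t, ‖G t‖)
  simpa only [hF_integral, F, tsum_mul_right] using hsum

end DirichletSeries

theorem stmt_14_general (r : ℕ) (α : Fin r → ℝ) (hα : ∀ i, 0 < α i)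
    (β : Fin r → ℂ) (a : ℝ)
    (haβ : ∀ i, 0 < ((α i : ℂ) * (a : ℂ) + β i).re)
    (lam : ℕ → ℝ) (hmono : StrictMono lam) (hpos : ∀ n, 0 < lam n)
    (c : ℕ → ℂ) (hsum : Summable fun n => ‖c n‖ * lam n ^ (-a))
    (Z : ℝ → ℂ)
    (hZ : Z = fun y : ℝ => ((1 / (2 * Real.pi) : ℝ) : ℂ) *
      ∫ t : ℝ,
        (∏ i, Complex.Gamma ((α i : ℂ) * ((a : ℂ) + t * Complex.I) + β i)) *
          (y : ℂ) ^ (-((a : ℂ) + t * Complex.I)))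
    (x : ℝ) (hx : 0 < x) :
    (((1 / (2 * Real.pi) : ℝ) : ℂ) *
      ∫ t : ℝ,
        (∑' n, c n * (lam n : ℂ) ^ (-((a : ℂ) + t * Complex.I))) *
          (∏ i, Complex.Gamma ((α i : ℂ) * ((a : ℂ) + t * Complex.I) + β i)) *
          (x : ℂ) ^ (-((a : ℂ) + t * Complex.I)) =
      ∑' n, c n * Z (lam n * x)) ∧
    Summable fun n => c n * Z (lam n * x) := by
  suffices h : HasSum (fun n => c n * Z (lam n * x)) (((1 / (2 * Real.pi) : ℝ) : ℂ) *
      ∫ t : ℝ,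
        (∑' n, c n * (lam n : ℂ) ^ (-((a : ℂ) + t * Complex.I))) *
          (∏ i, Complex.Gamma ((α i : ℂ) * ((a : ℂ) + t * Complex.I) + β i)) *
          (x : ℂ) ^ (-((a : ℂ) + t * Complex.I))) from ⟨h.tsum_eq.symm, h.summable⟩
  have hy : ∀ n, 0 < lam n * x := fun n => mul_pos (hpos n) hx
  have hinj : Function.Injective fun n => lam n * x :=
    (mul_left_injective₀ hx.ne').comp hmono.injective
  have hc : Summable fun n => ‖c n‖ * (lam n * x) ^ (-a) := by
    simpa only [Real.mul_rpow (hpos _).le hx.le, mul_assoc] using hsum.mul_right (x ^ (-a))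
  simp_rw [hZ, mul_right_comm (∑' n, _),
    tsum_mul_ofReal_cpow_mul_ofReal_cpow (fun n => (hpos n).le) hx.le]
  rcases r.eq_zero_or_pos with rfl | hr
  · simp only [Fin.prod_univ_zero, mul_one, one_mul,
      fun n => integral_ofReal_cpow_neg_vertical (hy n) a,
      integral_tsum_mul_ofReal_cpow_eq_zero hinj hy hc, mul_zero]
    exact hasSum_zero
  · simpa only [mul_left_comm (c _)] using
      (hasSum_integral_tsum_mul_ofReal_cpow_mul (integrable_prod_Gamma_ofReal_mul_vertical_add
        haβ (i₀ := ⟨0, hr⟩) (hα _).ne') hy hc).mul_left ((1 / (2 * Real.pi) : ℝ) : ℂ)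

/-- Interchange of a vertical-line inverse Mellin integral with a Dirichlet series. -/
theorem stmt_14 (r : ℕ) (α : Fin r → ℝ) (hα : ∀ i, 0 < α i)
    (β : Fin r → ℂ) (a : ℝ) (ha : 0 < a)
    (haβ : ∀ i, 0 < ((α i : ℂ) * (a : ℂ) + β i).re)
    (lam : ℕ → ℝ) (hmono : StrictMono lam) (hpos : ∀ n, 0 < lam n)
    (htop : Filter.Tendsto lam Filter.atTop Filter.atTop)
    (c : ℕ → ℂ) (hsum : Summable fun n => ‖c n‖ * lam n ^ (-a))
    (Z : ℝ → ℂ)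
    (hZ : Z = fun y : ℝ => ((1 / (2 * Real.pi) : ℝ) : ℂ) *
      ∫ t : ℝ,
        (∏ i, Complex.Gamma ((α i : ℂ) * ((a : ℂ) + t * Complex.I) + β i)) *
          (y : ℂ) ^ (-((a : ℂ) + t * Complex.I)))
    (x : ℝ) (hx : 0 < x) :
    (((1 / (2 * Real.pi) : ℝ) : ℂ) *
      ∫ t : ℝ,
        (∑' n, c n * (lam n : ℂ) ^ (-((a : ℂ) + t * Complex.I))) *
          (∏ i, Complex.Gamma ((α i : ℂ) * ((a : ℂ) + t * Complex.I) + β i)) *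
          (x : ℂ) ^ (-((a : ℂ) + t * Complex.I)) =
      ∑' n, c n * Z (lam n * x)) ∧
    Summable fun n => c n * Z (lam n * x) :=
  stmt_14_general r α hα β a haβ lam hmono hpos c hsum Z hZ x hx
end
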